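/- arXiv:2205.09566 — 6 statements merged into one kernel-verified Lean document; each statement's English description precedes it below -/
import Mathlib

section
/- The unique solution φ of the initial value problem φ'(t) = n·cot²(R − φ(t)), φ(0) = 0, with values in [0,R), satisfies tan(R − φ(t)) + φ(t) = tan(R) − n·t for all t in its domain. Consequently, φ(t) = R exactly at time T = (tan R − R)/n. -/
open Real Filter Topology Set

/-! Along the flow, `tan (R - φ) + φ` has derivative `-n`, since
`(1 / cos² u) · cot² u - cot² u = 1` for `u = R - φ`. Hence it equals `tan R - n t`, and
letting `φ → R` turns this identity into `R = tan R - n T`. -/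

lemma hasDerivAt_tan_sub_add {φ : ℝ → ℝ} {R c t : ℝ} (hsin : sin (R - φ t) ≠ 0)
    (hcos : cos (R - φ t) ≠ 0)
    (hφ : HasDerivAt φ (c * (cos (R - φ t) / sin (R - φ t)) ^ 2) t) :
    HasDerivAt (fun s => tan (R - φ s) + φ s) (-c) t := by
  have hval : 1 / cos (R - φ t) ^ 2 * -(c * (cos (R - φ t) / sin (R - φ t)) ^ 2)
      + c * (cos (R - φ t) / sin (R - φ t)) ^ 2 = -c := by
    field_simp
    linear_combination c * sin_sq_add_cos_sq (R - φ t)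
  have htan : HasDerivAt (fun s => tan (R - φ s))
      (1 / cos (R - φ t) ^ 2 * -(c * (cos (R - φ t) / sin (R - φ t)) ^ 2)) t :=
    ((Real.hasDerivAt_tan hcos).comp t (hφ.const_sub R) :)
  exact hval ▸ htan.add hφ

lemma eq_sub_mul_of_hasDerivAt {f : ℝ → ℝ} {a b c : ℝ}
    (hf : ∀ t ∈ Ico a b, HasDerivAt f (-c) t) : ∀ t ∈ Ico a b, f t = f a - c * (t - a) := by
  intro t ht
  have hsub : Icc a t ⊆ Ico a b := Icc_subset_Ico_right ht.2
  have hline (s : ℝ) : HasDerivAt (fun s => f a - c * (s - a)) (-c) s := by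
    simpa using ((hasDerivAt_id s).sub_const a).const_mul c |>.const_sub (f a)
  refine eq_of_has_deriv_right_eq (f' := fun _ => -c)
    (fun s hs => (hf s (hsub (Ico_subset_Icc_self hs))).hasDerivWithinAt)
    (fun s _ => (hline s).hasDerivWithinAt)
    (fun s hs => (hf s (hsub hs)).continuousAt.continuousWithinAt)
    (fun s _ => (hline s).continuousAt.continuousWithinAt) (by simp) t ⟨ht.1, le_rfl⟩

lemma tendsto_tan_sub_add {α : Type*} {l : Filter α} {φ : α → ℝ} {R : ℝ}
    (hφ : Tendsto φ l (𝓝 R)) : Tendsto (fun t => tan (R - φ t) + φ t) l (𝓝 R) := by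
  have hsub : Tendsto (fun t => R - φ t) l (𝓝 0) := by simpa using hφ.const_sub R
  have htan : Tendsto (fun t => tan (R - φ t)) l (𝓝 0) := by
    simpa [Function.comp_def] using (continuousAt_tan.mpr (by simp)).tendsto.comp hsub
  simpa using htan.add hφ

theorem stmt_4_general (n : ℕ) (hn : 1 ≤ n) (R T : ℝ) (hR' : R < π / 2) (hT : 0 < T)
    (φ : ℝ → ℝ) (h0 : φ 0 = 0)
    (hrange : ∀ t ∈ Set.Ico (0 : ℝ) T, φ t ∈ Set.Ico (0 : ℝ) R)
    (hode : ∀ t ∈ Set.Ico (0 : ℝ) T,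
      HasDerivAt φ ((n : ℝ) * (Real.cos (R - φ t) / Real.sin (R - φ t)) ^ 2) t) :
    (∀ t ∈ Set.Ico (0 : ℝ) T, Real.tan (R - φ t) + φ t = Real.tan R - n * t) ∧
      (Tendsto φ (nhdsWithin T (Set.Iio T)) (nhds R) → T = (Real.tan R - R) / n) := by
  have hderiv (t : ℝ) (ht : t ∈ Ico 0 T) :
      HasDerivAt (fun s => tan (R - φ s) + φ s) (-n) t := by
    obtain ⟨hφ0, hφR⟩ := hrange t ht
    refine hasDerivAt_tan_sub_add ?_ ?_ (hode t ht)
    · exact (sin_pos_of_pos_of_lt_pi (by linarith) (by linarith [pi_pos])).ne'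
    · exact (cos_pos_of_mem_Ioo ⟨by linarith [pi_pos], by linarith⟩).ne'
  have hflow (t : ℝ) (ht : t ∈ Ico 0 T) : tan (R - φ t) + φ t = tan R - n * t := by
    simpa [h0] using eq_sub_mul_of_hasDerivAt hderiv t ht
  refine ⟨hflow, fun hlim => ?_⟩
  have hIco : Ico 0 T ∈ 𝓝[<] T := mem_of_superset (Ioo_mem_nhdsLT hT) Ioo_subset_Ico_self
  have hline : Tendsto (fun t => tan R - n * t) (𝓝[<] T) (𝓝 (tan R - n * T)) :=
    ((continuous_const.sub (continuous_const.mul continuous_id)).tendsto T).mono_left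
      nhdsWithin_le_nhds
  have hR_eq : R = tan R - n * T :=
    tendsto_nhds_unique ((tendsto_tan_sub_add hlim).congr' (eventually_of_mem hIco hflow)) hline
  have hn0 : (n : ℝ) ≠ 0 := Nat.cast_ne_zero.mpr (by omega)
  field_simp
  linarith

/-- The solution of `φ' = n·cot²(R − φ)`, `φ(0) = 0`, with values in `[0,R)`, satisfies
`tan(R − φ(t)) + φ(t) = tan R − n·t`, and reaches `R` exactly at `T = (tan R − R)/n`. -/
theorem stmt_4 (n : ℕ) (hn : 1 ≤ n) (R T : ℝ) (hR : 0 < R) (hR' : R < π / 2) (hT : 0 < T)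
    (φ : ℝ → ℝ) (h0 : φ 0 = 0)
    (hrange : ∀ t ∈ Set.Ico (0 : ℝ) T, φ t ∈ Set.Ico (0 : ℝ) R)
    (hode : ∀ t ∈ Set.Ico (0 : ℝ) T,
      HasDerivAt φ ((n : ℝ) * (Real.cos (R - φ t) / Real.sin (R - φ t)) ^ 2) t) :
    (∀ t ∈ Set.Ico (0 : ℝ) T, Real.tan (R - φ t) + φ t = Real.tan R - n * t) ∧
      (Tendsto φ (nhdsWithin T (Set.Iio T)) (nhds R) → T = (Real.tan R - R) / n) :=
  stmt_4_general n hn R T hR' hT φ h0 hrange hode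
end

section
/- The unique solution φ of the initial value problem φ'(t) = n·coth²(R − φ(t)), φ(0) = 0, with values in [0,R), satisfies tanh(R − φ(t)) + φ(t) = tanh(R) + n·t for all t in its domain, and the collapsing time is T = (R − tanh R)/n. -/
open Real Filter

lemma my_hasDerivAt_tanh (x : ℝ) : HasDerivAt Real.tanh (1 / Real.cosh x ^ 2) x := by
  have h := (Real.hasDerivAt_sinh x).div (Real.hasDerivAt_cosh x)
    (ne_of_gt (Real.cosh_pos x))
  have heq : (Real.cosh x * Real.cosh x - Real.sinh x * Real.sinh x) / Real.cosh x ^ 2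
      = 1 / Real.cosh x ^ 2 := by
    rw [show Real.cosh x * Real.cosh x - Real.sinh x * Real.sinh x
        = Real.cosh x ^ 2 - Real.sinh x ^ 2 by ring, Real.cosh_sq_sub_sinh_sq]
  rw [heq] at h
  have : Real.tanh = fun y => Real.sinh y / Real.cosh y :=
    funext fun y => Real.tanh_eq_sinh_div_cosh y
  rw [this]
  exact h

/-- The solution of `φ' = n·coth²(R − φ)`, `φ(0) = 0`, with values in `[0,R)`, satisfies
`tanh(R − φ(t)) + φ(t) = tanh R + n·t`, and the collapsing time is `T = (R − tanh R)/n`. -/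
theorem stmt_5 (n : ℕ) (hn : 1 ≤ n) (R T : ℝ) (hR : 0 < R) (hT : 0 < T)
    (φ : ℝ → ℝ) (h0 : φ 0 = 0)
    (hrange : ∀ t ∈ Set.Ico (0 : ℝ) T, φ t ∈ Set.Ico (0 : ℝ) R)
    (hode : ∀ t ∈ Set.Ico (0 : ℝ) T,
      HasDerivAt φ ((n : ℝ) * (Real.cosh (R - φ t) / Real.sinh (R - φ t)) ^ 2) t) :
    (∀ t ∈ Set.Ico (0 : ℝ) T, Real.tanh (R - φ t) + φ t = Real.tanh R + n * t) ∧
      (Tendsto φ (nhdsWithin T (Set.Iio T)) (nhds R) → T = (R - Real.tanh R) / n) := by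
  set g : ℝ → ℝ := fun u => Real.tanh (R - φ u) + φ u - n * u with hg
  have hgderiv : ∀ s ∈ Set.Ico (0 : ℝ) T, HasDerivAt g 0 s := by
    intro s hs
    have hφs := hode s hs
    have hpos : 0 < R - φ s := sub_pos.2 (hrange s hs).2
    have hsinh : Real.sinh (R - φ s) ≠ 0 := ne_of_gt (by simpa using Real.sinh_pos_iff.2 hpos)
    have hcosh : Real.cosh (R - φ s) ≠ 0 := ne_of_gt (Real.cosh_pos _)
    have h1 : HasDerivAt (fun u => R - φ u)
        (-((n : ℝ) * (Real.cosh (R - φ s) / Real.sinh (R - φ s)) ^ 2)) s := hφs.const_sub R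
    have h2 := (my_hasDerivAt_tanh (R - φ s)).comp s h1
    have h3 := (h2.add hφs).sub ((hasDerivAt_id s).const_mul (n : ℝ))
    have hzero : 1 / Real.cosh (R - φ s) ^ 2 *
          -((n : ℝ) * (Real.cosh (R - φ s) / Real.sinh (R - φ s)) ^ 2)
        + (n : ℝ) * (Real.cosh (R - φ s) / Real.sinh (R - φ s)) ^ 2 - (n : ℝ) * 1 = 0 := by
      field_simp
      rw [Real.cosh_sq]
      ring
    rw [hzero] at h3
    exact h3
  have key : ∀ t ∈ Set.Ico (0 : ℝ) T, Real.tanh (R - φ t) + φ t = Real.tanh R + n * t := by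
    intro t ht
    have hsub : Set.Icc (0 : ℝ) t ⊆ Set.Ico (0 : ℝ) T :=
      fun s hs => ⟨hs.1, lt_of_le_of_lt hs.2 ht.2⟩
    have hconst := constant_of_has_deriv_right_zero
      (f := g) (a := 0) (b := t)
      (fun s hs => ((hgderiv s (hsub hs)).continuousAt).continuousWithinAt)
      (fun s hs => ((hgderiv s (hsub ⟨hs.1, hs.2.le⟩)).hasDerivWithinAt))
    have := hconst t ⟨le_refl 0 |>.trans ht.1, le_refl t⟩
    simp only [hg, h0, sub_zero, mul_zero] at this
    linarith [this]
  refine ⟨key, fun hlim => ?_⟩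
  have hmem : Set.Ioo (0 : ℝ) T ∈ nhdsWithin T (Set.Iio T) :=
    Ioo_mem_nhdsLT_of_mem ⟨hT, le_refl T⟩
  have h1 : Tendsto (fun t => Real.tanh (R - φ t) + φ t)
      (nhdsWithin T (Set.Iio T)) (nhds R) := by
    have htanh : Tendsto (fun t => Real.tanh (R - φ t)) (nhdsWithin T (Set.Iio T))
        (nhds (Real.tanh 0)) :=
      ((my_hasDerivAt_tanh 0).continuousAt.tendsto).comp (by simpa using (tendsto_const_nhds (x := R)).sub hlim)
    simpa [Real.tanh_zero] using htanh.add hlim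
  have h2 : Tendsto (fun t => Real.tanh R + (n : ℝ) * t)
      (nhdsWithin T (Set.Iio T)) (nhds (Real.tanh R + n * T)) :=
    ((continuous_const.add (continuous_const.mul continuous_id)).tendsto T).mono_left
      nhdsWithin_le_nhds
  have heq : Tendsto (fun t => Real.tanh (R - φ t) + φ t)
      (nhdsWithin T (Set.Iio T)) (nhds (Real.tanh R + n * T)) := by
    refine h2.congr' ?_
    filter_upwards [hmem] with s hs
    exact (key s ⟨hs.1.le, hs.2⟩).symm
  have huniq : R = Real.tanh R + n * T := tendsto_nhds_unique h1 heq
  have hn' : (n : ℝ) ≠ 0 := by positivity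
  field_simp
  linarith [huniq]
end

section
/- For m₁ − m₂ = 1 (with m₂ even), the unique solution φ of φ'(t) = cot(τ₀ − φ(t)), φ(0) = 0, with values in [0, τ₀) for fixed τ₀ ∈ (0, π/2), satisfies cos(τ₀ − φ(t)) = e^t · cos(τ₀), and the collapsing time is T = log(sec τ₀). -/
open Real Filter

/-! Along the flow `ψ = τ₀ - φ` satisfies `ψ' = -cot ψ`, so `(cos ψ)' = sin ψ · cot ψ = cos ψ`:
`cos ψ` solves `y' = y` and hence equals `e^t cos τ₀`. At the collapsing time `ψ → 0`, so
`e^T cos τ₀ = 1`. -/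

theorem eq_exp_mul_of_hasDerivAt_self {y : ℝ → ℝ} {a b : ℝ}
    (hy : ∀ t ∈ Set.Ico a b, HasDerivAt y (y t) t) :
    ∀ t ∈ Set.Ico a b, y t = exp (t - a) * y a := by
  set g : ℝ → ℝ := fun s => exp (-(s - a)) * y s
  have hg : ∀ s ∈ Set.Ico a b, HasDerivAt g 0 s := fun s hs => by
    have hexp : HasDerivAt (fun s => exp (-(s - a))) (-exp (-(s - a))) s := by
      simpa using ((hasDerivAt_id s).sub_const a).neg.exp
    exact (hexp.mul (hy s hs)).congr_deriv (by ring)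
  intro t ht
  have hsub : Set.Icc a t ⊆ Set.Ico a b := fun s hs => ⟨hs.1, hs.2.trans_lt ht.2⟩
  have hconst : g t = g a :=
    constant_of_has_deriv_right_zero
      (fun s hs => (hg s (hsub hs)).continuousAt.continuousWithinAt)
      (fun s hs => (hg s (hsub (Set.Ico_subset_Icc_self hs))).hasDerivWithinAt)
      t ⟨ht.1, le_rfl⟩
  simp only [g, sub_self, neg_zero, exp_zero, one_mul] at hconst
  rw [← hconst, ← mul_assoc, ← exp_add, add_neg_cancel, exp_zero, one_mul]

theorem hasDerivAt_cos_sub_of_cot {φ : ℝ → ℝ} {c t : ℝ}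
    (hφ : HasDerivAt φ (cos (c - φ t) / sin (c - φ t)) t) (hsin : sin (c - φ t) ≠ 0) :
    HasDerivAt (fun s => cos (c - φ s)) (cos (c - φ t)) t := by
  convert HasDerivAt.cos (hφ.const_sub c) using 1
  field_simp

/-- The solution of `φ' = cot(τ₀ − φ)`, `φ(0) = 0`, with values in `[0, τ₀)`,
`τ₀ ∈ (0, π/2)`, satisfies `cos(τ₀ − φ(t)) = e^t·cos τ₀`, and the collapsing time is
`T = log(sec τ₀)`. -/
theorem stmt_10 (τ₀ T : ℝ) (hτ₀ : 0 < τ₀) (hτ₀' : τ₀ < π / 2) (hT : 0 < T)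
    (φ : ℝ → ℝ) (h0 : φ 0 = 0)
    (hrange : ∀ t ∈ Set.Ico (0 : ℝ) T, φ t ∈ Set.Ico (0 : ℝ) τ₀)
    (hode : ∀ t ∈ Set.Ico (0 : ℝ) T,
      HasDerivAt φ (Real.cos (τ₀ - φ t) / Real.sin (τ₀ - φ t)) t) :
    (∀ t ∈ Set.Ico (0 : ℝ) T, Real.cos (τ₀ - φ t) = Real.exp t * Real.cos τ₀) ∧
      (Tendsto φ (nhdsWithin T (Set.Iio T)) (nhds τ₀) →
        T = Real.log (1 / Real.cos τ₀)) := by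
  have hsin : ∀ s ∈ Set.Ico (0 : ℝ) T, sin (τ₀ - φ s) ≠ 0 := fun s hs =>
    (sin_pos_of_pos_of_lt_pi (by linarith [(hrange s hs).2])
      (by linarith [(hrange s hs).1])).ne'
  have hcos : ∀ t ∈ Set.Ico (0 : ℝ) T, cos (τ₀ - φ t) = exp t * cos τ₀ := fun t ht => by
    simpa [h0] using eq_exp_mul_of_hasDerivAt_self
      (fun s hs => hasDerivAt_cos_sub_of_cot (hode s hs) (hsin s hs)) t ht
  refine ⟨hcos, fun hlim => ?_⟩
  have hleft : Tendsto (fun t => cos (τ₀ - φ t)) (nhdsWithin T (Set.Iio T)) (nhds 1) := by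
    simpa [Function.comp_def] using
      (continuous_cos.tendsto (τ₀ - τ₀)).comp ((tendsto_const_nhds (x := τ₀)).sub hlim)
  have heq : (fun t => cos (τ₀ - φ t)) =ᶠ[nhdsWithin T (Set.Iio T)] fun t => exp t * cos τ₀ := by
    filter_upwards [eventually_nhdsWithin_of_eventually_nhds (eventually_gt_nhds hT),
      self_mem_nhdsWithin] with t ht0 htT
    exact hcos t ⟨ht0.le, htT⟩
  have hexp : exp T * cos τ₀ = 1 :=
    tendsto_nhds_unique
      (((continuous_exp.mul continuous_const).tendsto T).mono_left nhdsWithin_le_nhds)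
      (hleft.congr' heq)
  rw [← eq_one_div_of_mul_eq_one_left hexp, log_exp]
end

section
/- Let a = (n+q)/2 and b = n−q with 0 < q ≤ n. The unique solution φ of φ'(t) = q·coth(R − φ(t)) + ((n−q)/2)·coth((R − φ(t))/2), φ(0) = 0, with values in [0,R), satisfies e^{R−φ(t)} / (a·(e^{2(R−φ(t))} + 1) + b·e^{R−φ(t)}) = e^{a t}·e^{R}/(a·(e^{2R}+1)+b·e^{R}), and the collapsing time is T = (1/a)·log((a·(e^{2R}+1)+b·e^{R})/(2n·e^{R})). -/
/-!
Put `u = R - φ`, so that `u' = -F(u)` with `F(u) = q coth u + ((n-q)/2) coth (u/2)`. Writing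
`coth x = (e^{2x}+1)/(e^{2x}-1)` and `coth (x/2) = (e^x+1)/(e^x-1)` gives
`F(u) (e^{2u} - 1) = a (e^{2u} + 1) + b e^u =: D(u)`, and `D(u) - D'(u) = -a (e^{2u} - 1)`, so the
weight `W(u) = e^u / D(u)` satisfies `(W ∘ u)' = a (W ∘ u)`, i.e. `W(u(t)) = e^{at} W(R)`.
At the collapsing time `u → 0` and `W(0) = 1/(2a+b) = 1/(2n)`, which determines `T`.
-/

open Real Filter Set Topology

namespace Real

theorem cosh_mul_exp_two_mul_sub_one (x : ℝ) :
    cosh x * (exp (2 * x) - 1) = sinh x * (exp (2 * x) + 1) := by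
  have hx : exp (2 * x) = exp x * exp x := by rw [two_mul, exp_add]
  rw [cosh_eq, sinh_eq, hx, exp_neg]
  field_simp

theorem coth_mul_exp_two_mul_sub_one {x : ℝ} (hx : x ≠ 0) :
    cosh x / sinh x * (exp (2 * x) - 1) = exp (2 * x) + 1 := by
  rw [div_mul_eq_mul_div, cosh_mul_exp_two_mul_sub_one, mul_div_cancel_left₀ _ (sinh_ne_zero.2 hx)]

theorem coth_half_mul_exp_two_mul_sub_one {x : ℝ} (hx : x ≠ 0) :
    cosh (x / 2) / sinh (x / 2) * (exp (2 * x) - 1) = (exp x + 1) ^ 2 := by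
  have h := coth_mul_exp_two_mul_sub_one (div_ne_zero hx two_ne_zero)
  have hsq : exp (2 * x) - 1 = (exp (2 * (x / 2)) - 1) * (exp x + 1) := by
    rw [mul_div_cancel₀ x two_ne_zero, two_mul, exp_add]
    ring
  rw [hsq, ← mul_assoc, h, mul_div_cancel₀ x two_ne_zero, sq]

end Real

noncomputable def sphereSpeed (n q u : ℝ) : ℝ :=
  q * (cosh u / sinh u) + ((n - q) / 2) * (cosh (u / 2) / sinh (u / 2))

noncomputable def collapseDenom (a b u : ℝ) : ℝ :=
  a * (exp (2 * u) + 1) + b * exp u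

theorem sphereSpeed_mul_exp_two_mul_sub_one (n q : ℝ) {u : ℝ} (hu : u ≠ 0) :
    sphereSpeed n q u * (exp (2 * u) - 1) = collapseDenom ((n + q) / 2) (n - q) u := by
  have hexp : exp (2 * u) = exp u ^ 2 := by rw [two_mul, exp_add, sq]
  rw [sphereSpeed, collapseDenom, add_mul, mul_assoc, mul_assoc, coth_mul_exp_two_mul_sub_one hu,
    coth_half_mul_exp_two_mul_sub_one hu, hexp]
  ring

noncomputable def collapseWeight (a b u : ℝ) : ℝ :=
  exp u / collapseDenom a b u

theorem collapseDenom_pos {a b : ℝ} (ha : 0 < a) (hb : 0 ≤ b) (u : ℝ) : 0 < collapseDenom a b u := by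
  unfold collapseDenom
  positivity

theorem collapseDenom_zero (a b : ℝ) : collapseDenom a b 0 = 2 * a + b := by
  simp only [collapseDenom, mul_zero, exp_zero]
  ring

theorem collapseWeight_zero (a b : ℝ) : collapseWeight a b 0 = (2 * a + b)⁻¹ := by
  rw [collapseWeight, collapseDenom_zero, exp_zero, one_div]

theorem hasDerivAt_collapseDenom (a b u : ℝ) :
    HasDerivAt (collapseDenom a b) (2 * a * exp (2 * u) + b * exp u) u := by
  have h := ((((hasDerivAt_id u).const_mul 2).exp.add_const 1).const_mul a).add
    ((hasDerivAt_exp u).const_mul b)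
  exact h.congr_deriv (by simp only [id]; ring)

theorem hasDerivAt_collapseWeight {a b u : ℝ} (hD : collapseDenom a b u ≠ 0) :
    HasDerivAt (collapseWeight a b)
      (-a * (exp (2 * u) - 1) / collapseDenom a b u * collapseWeight a b u) u := by
  refine ((hasDerivAt_exp u).div (hasDerivAt_collapseDenom a b u) hD).congr_deriv ?_
  rw [collapseWeight]
  field_simp
  rw [collapseDenom]
  ring

theorem hasDerivAt_collapseWeight_comp {n q t : ℝ} {ψ : ℝ → ℝ}
    (hψ : HasDerivAt ψ (-sphereSpeed n q (ψ t)) t) (hψt : ψ t ≠ 0)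
    (hD : collapseDenom ((n + q) / 2) (n - q) (ψ t) ≠ 0) :
    HasDerivAt (fun s => collapseWeight ((n + q) / 2) (n - q) (ψ s))
      ((n + q) / 2 * collapseWeight ((n + q) / 2) (n - q) (ψ t)) t := by
  refine ((hasDerivAt_collapseWeight hD).comp t hψ).congr_deriv ?_
  rw [show ∀ a E D W S : ℝ, -a * (E - 1) / D * W * -S = a * W * (S * (E - 1) / D) by
      intros; ring,
    sphereSpeed_mul_exp_two_mul_sub_one n q hψt, div_self hD, mul_one]

theorem eq_exp_mul_mul_of_hasDerivAt {f : ℝ → ℝ} {c T : ℝ}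
    (hf : ∀ t ∈ Ico 0 T, HasDerivAt f (c * f t) t) :
    ∀ t ∈ Ico 0 T, f t = exp (c * t) * f 0 := by
  set g : ℝ → ℝ := fun t => exp (-(c * t)) * f t
  have hg : ∀ t ∈ Ico 0 T, HasDerivAt g 0 t := fun t ht => by
    refine ((((hasDerivAt_id t).const_mul c).neg.exp).mul (hf t ht)).congr_deriv ?_
    simp only [id]
    ring
  intro t ⟨ht0, htT⟩
  have hsub : Icc 0 t ⊆ Ico 0 T := fun s hs => ⟨hs.1, hs.2.trans_lt htT⟩
  have hconst : g t = g 0 :=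
    constant_of_has_deriv_right_zero
      (fun s hs => (hg s (hsub hs)).continuousAt.continuousWithinAt)
      (fun s hs => (hg s (hsub (Ico_subset_Icc_self hs))).hasDerivWithinAt) t
      (right_mem_Icc.2 ht0)
  simp only [g, mul_zero, neg_zero, exp_zero, one_mul] at hconst
  rw [← hconst, ← mul_assoc, ← exp_add, add_neg_cancel, exp_zero, one_mul]

theorem collapseWeight_zero_eq_of_tendsto {a b R T : ℝ} {u : ℝ → ℝ} (hT : 0 < T)
    (hD : collapseDenom a b 0 ≠ 0) (hu : Tendsto u (𝓝[<] T) (𝓝 0))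
    (hw : ∀ t ∈ Ico 0 T, collapseWeight a b (u t) = exp (a * t) * collapseWeight a b R) :
    collapseWeight a b 0 = exp (a * T) * collapseWeight a b R := by
  have hlimW : Tendsto (fun t => collapseWeight a b (u t)) (𝓝[<] T) (𝓝 (collapseWeight a b 0)) :=
    (hasDerivAt_collapseWeight hD).continuousAt.tendsto.comp hu
  have hlimE : Tendsto (fun t => exp (a * t) * collapseWeight a b R) (𝓝[<] T)
      (𝓝 (exp (a * T) * collapseWeight a b R)) :=
    ((continuous_exp.comp (continuous_const_mul a)).tendsto T).mono_left nhdsWithin_le_nhds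
      |>.mul_const _
  have hEv : ∀ᶠ t in 𝓝[<] T, t ∈ Ico 0 T :=
    mem_of_superset (Ioo_mem_nhdsLT hT) Ioo_subset_Ico_self
  exact tendsto_nhds_unique (hlimW.congr' (hEv.mono hw)) hlimE

theorem stmt_11_general (n q R T : ℝ) (hq : 0 < q) (hqn : q ≤ n)
    (hT : 0 < T)
    (a b : ℝ) (ha : a = (n + q) / 2) (hb : b = n - q)
    (φ : ℝ → ℝ) (h0 : φ 0 = 0)
    (hrange : ∀ t ∈ Set.Ico (0 : ℝ) T, φ t ∈ Set.Ico (0 : ℝ) R)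
    (hode : ∀ t ∈ Set.Ico (0 : ℝ) T,
      HasDerivAt φ
        (q * (Real.cosh (R - φ t) / Real.sinh (R - φ t)) +
          ((n - q) / 2) * (Real.cosh ((R - φ t) / 2) / Real.sinh ((R - φ t) / 2))) t) :
    (∀ t ∈ Set.Ico (0 : ℝ) T,
        Real.exp (R - φ t) /
            (a * (Real.exp (2 * (R - φ t)) + 1) + b * Real.exp (R - φ t)) =
          Real.exp (a * t) * Real.exp R /
            (a * (Real.exp (2 * R) + 1) + b * Real.exp R)) ∧
      (Tendsto φ (nhdsWithin T (Set.Iio T)) (nhds R) →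
        T = (1 / a) * Real.log
          ((a * (Real.exp (2 * R) + 1) + b * Real.exp R) / (2 * n * Real.exp R))) := by
  have ha0 : 0 < a := by rw [ha]; linarith
  have hb0 : 0 ≤ b := by rw [hb]; linarith
  have hD := collapseDenom_pos ha0 hb0
  have hweight : ∀ t ∈ Ico 0 T,
      collapseWeight a b (R - φ t) = exp (a * t) * collapseWeight a b R := by
    have hderiv : ∀ t ∈ Ico 0 T, HasDerivAt (fun s => collapseWeight a b (R - φ s))
        (a * collapseWeight a b (R - φ t)) t := by
      intro t ht
      have hu : R - φ t ≠ 0 := sub_ne_zero.2 (hrange t ht).2.ne'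
      subst ha hb
      exact hasDerivAt_collapseWeight_comp ((hode t ht).const_sub R) hu (hD _).ne'
    simpa only [h0, sub_zero] using eq_exp_mul_mul_of_hasDerivAt hderiv
  refine ⟨fun t ht => by rw [mul_div_assoc]; exact hweight t ht, fun hlim => ?_⟩
  have hlimit := collapseWeight_zero_eq_of_tendsto hT (hD 0).ne'
    (by simpa using hlim.const_sub R) hweight
  have hexp : exp (a * T) = collapseDenom a b R / (2 * n * exp R) := by
    rw [collapseWeight_zero, collapseWeight, show 2 * a + b = 2 * n by rw [ha, hb]; ring]
      at hlimit
    have hn : 0 < n := by linarith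
    have hDR := (hD R).ne'
    field_simp at hlimit ⊢
    linarith
  change T = 1 / a * log (collapseDenom a b R / (2 * n * exp R))
  rw [← hexp, log_exp]
  field_simp

/-- With `a = (n+q)/2`, `b = n − q`, the solution of
`φ' = q·coth(R − φ) + ((n−q)/2)·coth((R − φ)/2)`, `φ(0) = 0`, values in `[0,R)`, satisfies
`e^{R−φ(t)}/(a(e^{2(R−φ(t))}+1)+b·e^{R−φ(t)}) = e^{at}·e^R/(a(e^{2R}+1)+b·e^R)`, and the
collapsing time is `T = (1/a)·log((a(e^{2R}+1)+b·e^R)/(2n·e^R))`. -/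
theorem stmt_11 (n q R T : ℝ) (hn : 1 ≤ n) (hq : 0 < q) (hqn : q ≤ n)
    (hR : 0 < R) (hT : 0 < T)
    (a b : ℝ) (ha : a = (n + q) / 2) (hb : b = n - q)
    (φ : ℝ → ℝ) (h0 : φ 0 = 0)
    (hrange : ∀ t ∈ Set.Ico (0 : ℝ) T, φ t ∈ Set.Ico (0 : ℝ) R)
    (hode : ∀ t ∈ Set.Ico (0 : ℝ) T,
      HasDerivAt φ
        (q * (Real.cosh (R - φ t) / Real.sinh (R - φ t)) +
          ((n - q) / 2) * (Real.cosh ((R - φ t) / 2) / Real.sinh ((R - φ t) / 2))) t) :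
    (∀ t ∈ Set.Ico (0 : ℝ) T,
        Real.exp (R - φ t) /
            (a * (Real.exp (2 * (R - φ t)) + 1) + b * Real.exp (R - φ t)) =
          Real.exp (a * t) * Real.exp R /
            (a * (Real.exp (2 * R) + 1) + b * Real.exp R)) ∧
      (Tendsto φ (nhdsWithin T (Set.Iio T)) (nhds R) →
        T = (1 / a) * Real.log
          ((a * (Real.exp (2 * R) + 1) + b * Real.exp R) / (2 * n * Real.exp R))) :=
  stmt_11_general n q R T hq hqn hT a b ha hb φ h0 hrange hode
end

section
/- Let u : M × [0,T) → ℝ be C¹ where M is a compact manifold, and define u_min(t) = min_{p∈M} u(p,t). Then u_min is locally Lipschitz on (0,T), and at every t where u_min is differentiable, u_min'(t) = ∂u/∂t(p₀, t) for any p₀ ∈ M at which u(·,t) attains its minimum. -/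
open Filter

/-- Hamilton's trick: for a `C¹` function `u` on `M × [0,T)` with `M` compact,
`u_min(t) = min_p u(p,t)` is locally Lipschitz on `(0,T)`, and at every point of
differentiability `u_min'(t) = ∂u/∂t(p₀, t)` for any minimizer `p₀` of `u(·,t)`. -/
theorem stmt_16 (M : Type*) [TopologicalSpace M] [CompactSpace M] [Nonempty M]
    (T : ℝ) (hT : 0 < T) (u ut : M × ℝ → ℝ)
    (hu : Continuous u) (hut : Continuous ut)
    (hder : ∀ p : M, ∀ t ∈ Set.Ico (0 : ℝ) T, HasDerivAt (fun s => u (p, s)) (ut (p, t)) t)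
    (umin : ℝ → ℝ) (humin : ∀ t, umin t = ⨅ p : M, u (p, t)) :
    (∀ t ∈ Set.Ioo (0 : ℝ) T, ∃ ε > 0, ∃ K : NNReal,
        LipschitzOnWith K umin (Set.Ioo (t - ε) (t + ε) ∩ Set.Ioo 0 T)) ∧
      (∀ t ∈ Set.Ioo (0 : ℝ) T, DifferentiableAt ℝ umin t →
        ∀ p₀ : M, (∀ p : M, u (p₀, t) ≤ u (p, t)) → deriv umin t = ut (p₀, t)) := by
  -- For every time `s` the minimum is attained.
  have key : ∀ s : ℝ, ∃ q : M, umin s = u (q, s) ∧ ∀ p : M, u (q, s) ≤ u (p, s) := by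
    intro s
    obtain ⟨q, -, hq⟩ := isCompact_univ.exists_isMinOn Set.univ_nonempty
      ((hu.comp (continuous_id.prodMk continuous_const)).continuousOn :
        ContinuousOn (fun p : M => u (p, s)) Set.univ)
    have hq' : ∀ p : M, u (q, s) ≤ u (p, s) := fun p => hq trivial
    refine ⟨q, ?_, hq'⟩
    rw [humin]
    exact le_antisymm (ciInf_le ⟨u (q, s), Set.forall_mem_range.2 hq'⟩ q) (le_ciInf hq')
  constructor
  · intro t ht
    obtain ⟨ht0, htT⟩ := ht
    set ε := min t (T - t) / 2 with hεdef
    have hε0 : 0 < ε := by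
      have h1 : 0 < min t (T - t) := lt_min ht0 (by linarith)
      positivity
    have hεt : ε < t := by
      have : min t (T - t) ≤ t := min_le_left _ _
      simp only [hεdef]; linarith
    have hεT : t + ε < T := by
      have : min t (T - t) ≤ T - t := min_le_right _ _
      simp only [hεdef]; linarith
    have hIcc : Set.Icc (t - ε) (t + ε) ⊆ Set.Ico (0 : ℝ) T := by
      intro x hx
      exact ⟨by linarith [hx.1], by linarith [hx.2]⟩
    have hcomp : IsCompact ((Set.univ : Set M) ×ˢ Set.Icc (t - ε) (t + ε)) :=
      isCompact_univ.prod isCompact_Icc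
    obtain ⟨C, hC⟩ := hcomp.exists_bound_of_continuousOn hut.continuousOn
    have hC0 : 0 ≤ C := le_trans (norm_nonneg _)
      (hC (Classical.arbitrary M, t) ⟨trivial, by constructor <;> linarith⟩)
    -- each slice is C-Lipschitz on the interval
    have hlip : ∀ p : M, ∀ x ∈ Set.Icc (t - ε) (t + ε), ∀ y ∈ Set.Icc (t - ε) (t + ε),
        ‖u (p, y) - u (p, x)‖ ≤ C * ‖y - x‖ := by
      intro p x hx y hy
      refine (convex_Icc (t - ε) (t + ε)).norm_image_sub_le_of_norm_hasDerivWithin_le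
        (f := fun s => u (p, s)) (f' := fun s => ut (p, s)) ?_ ?_ hx hy
      · intro z hz
        exact (hder p z (hIcc hz)).hasDerivWithinAt
      · intro z hz
        exact hC (p, z) ⟨trivial, hz⟩
    refine ⟨ε, hε0, Real.toNNReal C, LipschitzOnWith.of_dist_le_mul ?_⟩
    have habs : ∀ x ∈ Set.Icc (t - ε) (t + ε), ∀ y ∈ Set.Icc (t - ε) (t + ε),
        umin x - umin y ≤ C * |x - y| := by
      intro x hx y hy
      obtain ⟨q, hq1, hq2⟩ := key y
      obtain ⟨q', hq1', hq2'⟩ := key x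
      have h1 : umin x ≤ u (q, x) := by rw [hq1']; exact hq2' q
      have h2 : ‖u (q, x) - u (q, y)‖ ≤ C * ‖x - y‖ := hlip q y hy x hx
      rw [Real.norm_eq_abs, Real.norm_eq_abs] at h2
      have := abs_le.1 h2
      linarith [this.2, h1, hq1.ge, hq1.le]
    intro x hx y hy
    have hx' : x ∈ Set.Icc (t - ε) (t + ε) := ⟨hx.1.1.le, hx.1.2.le⟩
    have hy' : y ∈ Set.Icc (t - ε) (t + ε) := ⟨hy.1.1.le, hy.1.2.le⟩
    rw [Real.dist_eq, Real.dist_eq]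
    have h1 := habs x hx' y hy'
    have h2 := habs y hy' x hx'
    rw [abs_sub_comm y x] at h2
    have hK : (C : ℝ) ≤ (Real.toNNReal C : ℝ) := by
      rw [Real.coe_toNNReal _ hC0]
    have habs' : |umin x - umin y| ≤ C * |x - y| := abs_le.2 ⟨by linarith, by linarith⟩
    calc |umin x - umin y| ≤ C * |x - y| := habs'
      _ ≤ (Real.toNNReal C : ℝ) * |x - y| := by
          exact mul_le_mul_of_nonneg_right hK (abs_nonneg _)
  · intro t ht hdiff p₀ hp₀
    have h1 : HasDerivAt (fun s => u (p₀, s)) (ut (p₀, t)) t :=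
      hder p₀ t ⟨ht.1.le, ht.2⟩
    have hg : HasDerivAt (fun s => u (p₀, s) - umin s) (ut (p₀, t) - deriv umin t) t :=
      h1.sub hdiff.hasDerivAt
    have humint : umin t = u (p₀, t) := by
      obtain ⟨q, hq1, hq2⟩ := key t
      rw [hq1]
      exact le_antisymm (hq2 p₀) (hp₀ q)
    have hmin : IsLocalMin (fun s => u (p₀, s) - umin s) t := by
      apply Filter.Eventually.of_forall
      intro s
      obtain ⟨q, hq1, hq2⟩ := key s
      have : umin s ≤ u (p₀, s) := by rw [hq1]; exact hq2 p₀
      simp only [humint]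
      linarith
    have := hmin.hasDerivAt_eq_zero hg
    linarith
end

section
/- Fix n ≥ 1, r odd with 1 ≤ r ≤ n, and g ≥ 2. Define for τ ∈ (0, π/g) the principal curvatures k_i(τ) = cot(τ + (i−1)π/g), i = 1,...,g with multiplicities m_i summing to n, and H_r(τ) the r-th elementary symmetric polynomial in the n principal curvatures (with multiplicity). If m₁ ≥ r, then there exists δ > 0 such that for all τ₀ ∈ (0, δ): H_r(τ₀) > 0 and τ ↦ H_r(τ₀ − τ) is strictly increasing on [0, τ₀). -/
/-!
Write the principal curvatures as `cot (τ + θ)`, `θ` running over a multiset of angles in which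
`0` occurs `m₁` times and no other angle is a multiple of `π`. Multiplying every curvature by
`tan τ` gives `H_r(τ) = G(τ) cot^r τ`, where `G` is the `r`-th elementary symmetric function of
`m₁` ones and of the functions `tan τ · cot (τ + θ)`, `θ ≠ 0`. These are smooth near `0` and vanish
there, so `G` is `C¹` near `0` with `G(0) = binom(m₁, r) > 0`. Hence `H_r > 0` and
`H_r' = cot^(r-1) τ / sin² τ · (G'(τ) sin τ cos τ - r G(τ)) < 0` for small `τ > 0`.
-/

open Real Set Filter Topology

namespace Multiset

variable {R : Type*} [CommSemiring R]

theorem esymm_zero_right (s : Multiset R) : s.esymm 0 = 1 := by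
  simp [esymm]

theorem esymm_zero_left_succ (k : ℕ) : (0 : Multiset R).esymm (k + 1) = 0 := by
  simp [esymm, powersetCard_zero_right]

theorem esymm_cons_succ (a : R) (s : Multiset R) (k : ℕ) :
    (a ::ₘ s).esymm (k + 1) = s.esymm (k + 1) + a * s.esymm k := by
  simp [esymm, powersetCard_cons, map_map, sum_map_mul_left]

theorem esymm_replicate (n k : ℕ) (a : R) : (replicate n a).esymm k = n.choose k * a ^ k := by
  induction n generalizing k with
  | zero => cases k <;> simp [esymm_zero_right, esymm_zero_left_succ]
  | succ n ih =>
    cases k with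
    | zero => simp [esymm_zero_right]
    | succ k =>
      rw [replicate_succ, esymm_cons_succ, ih, ih, Nat.choose_succ_succ']
      push_cast
      ring

theorem esymm_add_replicate_zero (s : Multiset R) (n : ℕ) {k : ℕ} (hk : k ≠ 0) :
    (s + replicate n 0).esymm k = s.esymm k := by
  obtain ⟨k, rfl⟩ := Nat.exists_eq_succ_of_ne_zero hk
  induction n with
  | zero => simp
  | succ n ih => rw [replicate_succ, add_cons, esymm_cons_succ, ih, zero_mul, add_zero]

theorem contDiffAt_esymm_map {𝕜 E : Type*} [NontriviallyNormedField 𝕜] [NormedAddCommGroup E]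
    [NormedSpace 𝕜 E] {n : WithTop ℕ∞} {x : E} {l : Multiset (E → 𝕜)}
    (hl : ∀ f ∈ l, ContDiffAt 𝕜 n f x) (k : ℕ) :
    ContDiffAt 𝕜 n (fun y => (l.map (· y)).esymm k) x := by
  induction l using Multiset.induction_on generalizing k with
  | empty => cases k <;> simp [esymm_zero_right, esymm_zero_left_succ, contDiffAt_const]
  | cons f l ih =>
    have hf := hl f (mem_cons_self f l)
    have ih := ih fun g hg => hl g (mem_cons_of_mem hg)
    cases k with
    | zero => simp [esymm_zero_right, contDiffAt_const]
    | succ k =>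
      simp only [map_cons, esymm_cons_succ]
      exact (ih (k + 1)).add (hf.mul (ih k))

end Multiset

theorem Real.contDiffAt_cot {n : WithTop ℕ∞} {x : ℝ} (hx : sin x ≠ 0) : ContDiffAt ℝ n cot x := by
  rw [show cot = fun y => cos y / sin y from funext cot_eq_cos_div_sin]
  exact contDiff_cos.contDiffAt.div contDiff_sin.contDiffAt hx

theorem Real.hasDerivAt_cot {x : ℝ} (hx : sin x ≠ 0) : HasDerivAt cot (-1 / sin x ^ 2) x := by
  have h := (hasDerivAt_cos x).div (hasDerivAt_sin x) hx
  rw [show -sin x * sin x - cos x * cos x = -1 by nlinarith [sin_sq_add_cos_sq x]] at h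
  rwa [show cot = fun y => cos y / sin y from funext cot_eq_cos_div_sin]

theorem Real.sin_nat_mul_pi_div_ne_zero {i g : ℕ} (hi : 0 < i) (hig : i < g) :
    sin (i * π / g) ≠ 0 := by
  have hg : (0 : ℝ) < g := by exact_mod_cast hi.trans hig
  have hi : (0 : ℝ) < i := by exact_mod_cast hi
  refine (sin_pos_of_pos_of_lt_pi (by positivity) ?_).ne'
  rw [div_lt_iff₀ hg, mul_comm]
  exact mul_lt_mul_of_pos_left (by exact_mod_cast hig) pi_pos

theorem hasDerivAt_mul_cot_pow {G : ℝ → ℝ} {G' x : ℝ} (hG : HasDerivAt G G' x) (hx : sin x ≠ 0)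
    {r : ℕ} (hr : r ≠ 0) :
    HasDerivAt (fun τ => G τ * cot τ ^ r)
      (cot x ^ (r - 1) / sin x ^ 2 * (G' * sin x * cos x - r * G x)) x := by
  have hcot : HasDerivAt (fun τ => cot τ ^ r) (r * cot x ^ (r - 1) * (-1 / sin x ^ 2)) x :=
    (hasDerivAt_cot hx).pow r
  refine (hG.fun_mul hcot).congr_deriv ?_
  obtain ⟨k, rfl⟩ := Nat.exists_eq_add_one_of_ne_zero hr
  simp only [cot_eq_cos_div_sin, Nat.add_sub_cancel, div_pow]
  push_cast
  field_simp
  ring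

theorem eventually_strictAntiOn_mul_cot_pow {G : ℝ → ℝ} (hG : ContDiffAt ℝ 1 G 0)
    (hG0 : 0 < G 0) {r : ℕ} (hr : r ≠ 0) :
    ∀ᶠ δ in 𝓝[>] 0, (∀ τ ∈ Ioo 0 δ, 0 < G τ * cot τ ^ r) ∧
      StrictAntiOn (fun τ => G τ * cot τ ^ r) (Ioo 0 δ) := by
  obtain ⟨G', u, hu, hG'u, hGu⟩ := contDiffAt_one_iff.1 hG
  set φ : ℝ → ℝ := fun x => G' x 1 * sin x * cos x - r * G x
  have hφ : ContinuousAt φ 0 :=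
    ((((hG'u.continuousAt hu).clm_apply continuousAt_const).mul continuous_sin.continuousAt).mul
      continuous_cos.continuousAt).sub (continuousAt_const.mul hG.continuousAt)
  have hφ0 : φ 0 < 0 := by
    simp only [φ, sin_zero, mul_zero, zero_mul, zero_sub, neg_lt_zero]
    exact mul_pos (by positivity) hG0
  have hev : ∀ᶠ x in 𝓝[>] 0, x ∈ Ioo 0 (π / 2) ∧ x ∈ u ∧ φ x < 0 ∧ 0 < G x := by
    filter_upwards [Ioo_mem_nhdsGT (show (0 : ℝ) < π / 2 by positivity), nhdsWithin_le_nhds hu,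
      nhdsWithin_le_nhds (hφ.eventually_lt continuousAt_const hφ0),
      nhdsWithin_le_nhds (continuousAt_const.eventually_lt hG.continuousAt hG0)]
      with x h₁ h₂ h₃ h₄ using ⟨h₁, h₂, h₃, h₄⟩
  obtain ⟨δ₀, hδ₀, hsub₀⟩ := mem_nhdsGT_iff_exists_Ioo_subset.1 hev
  filter_upwards [Ioc_mem_nhdsGT hδ₀] with δ hδ
  have hsub : Ioo 0 δ ⊆ _ := (Ioo_subset_Ioo_right hδ.2).trans hsub₀
  have hcot : ∀ x ∈ Ioo 0 δ, 0 < sin x ∧ 0 < cot x := fun x hx => by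
    obtain ⟨⟨h0, hπ⟩, -⟩ := hsub hx
    have hsin := sin_pos_of_pos_of_lt_pi h0 (by linarith [pi_pos])
    exact ⟨hsin, cot_eq_cos_div_sin x ▸ div_pos (cos_pos_of_mem_Ioo ⟨by linarith, hπ⟩) hsin⟩
  have hderiv : ∀ x ∈ Ioo 0 δ,
      HasDerivAt (fun τ => G τ * cot τ ^ r) (cot x ^ (r - 1) / sin x ^ 2 * φ x) x :=
    fun x hx => hasDerivAt_mul_cot_pow (hGu x (hsub hx).2.1).hasDerivAt (hcot x hx).1.ne' hr
  refine ⟨fun x hx => mul_pos (hsub hx).2.2.2 (pow_pos (hcot x hx).2 r), ?_⟩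
  refine strictAntiOn_of_hasDerivWithinAt_neg (f' := fun x => cot x ^ (r - 1) / sin x ^ 2 * φ x)
    (convex_Ioo 0 δ) (fun x hx => (hderiv x hx).continuousAt.continuousWithinAt)
    (fun x hx => ?_) (fun x hx => ?_)
  · rw [interior_Ioo] at hx ⊢
    exact (hderiv x hx).hasDerivWithinAt
  · rw [interior_Ioo] at hx
    obtain ⟨hsin, hcotx⟩ := hcot x hx
    exact mul_neg_of_pos_of_neg (by positivity) (hsub hx).2.2.1

noncomputable def esymmCot (Θ : Multiset ℝ) (r : ℕ) (τ : ℝ) : ℝ :=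
  (Θ.map fun θ => cot (τ + θ)).esymm r

theorem eventually_strictAntiOn_esymmCot {A : Multiset ℝ} (hA : ∀ θ ∈ A, sin θ ≠ 0) {m r : ℕ}
    (hr : r ≠ 0) (hrm : r ≤ m) :
    ∀ᶠ δ in 𝓝[>] 0, (∀ τ ∈ Ioo 0 δ, 0 < esymmCot (Multiset.replicate m 0 + A) r τ) ∧
      StrictAntiOn (esymmCot (Multiset.replicate m 0 + A) r) (Ioo 0 δ) := by
  set G : ℝ → ℝ := fun τ => (Multiset.replicate m 1 + A.map fun θ => tan τ * cot (τ + θ)).esymm r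
  have hG : ContDiffAt ℝ 1 G 0 := by
    set l : Multiset (ℝ → ℝ) :=
      Multiset.replicate m (fun _ => 1) + A.map fun θ τ => tan τ * cot (τ + θ)
    have hGl : G = fun τ => (l.map (· τ)).esymm r := by
      funext τ
      simp [G, l, Multiset.map_replicate, Multiset.map_map]
    rw [hGl]
    refine Multiset.contDiffAt_esymm_map (fun f hf => ?_) r
    rcases Multiset.mem_add.1 hf with hf | hf
    · rw [Multiset.eq_of_mem_replicate hf]
      exact contDiffAt_const
    · obtain ⟨θ, hθ, rfl⟩ := Multiset.mem_map.1 hf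
      exact (contDiffAt_tan.2 (by simp)).mul
        ((contDiffAt_cot (by simpa using hA θ hθ)).comp 0 (contDiffAt_id.add contDiffAt_const))
  have hG_zero : G 0 = m.choose r := by
    simp [G, Multiset.map_const', Multiset.esymm_add_replicate_zero _ _ hr,
      Multiset.esymm_replicate]
  have hEG : ∀ τ ∈ Ioo 0 (π / 2), esymmCot (Multiset.replicate m 0 + A) r τ = G τ * cot τ ^ r := by
    rintro τ ⟨hτ₀, hτ₁⟩
    have hcot_tan : cot τ * tan τ = 1 := by
      rw [cot_eq_cos_div_sin, tan_eq_sin_div_cos]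
      have := (sin_pos_of_pos_of_lt_pi hτ₀ (by linarith [pi_pos])).ne'
      have := (cos_pos_of_mem_Ioo ⟨by linarith, hτ₁⟩).ne'
      field_simp
    rw [mul_comm, ← smul_eq_mul, Multiset.pow_smul_esymm, esymmCot]
    simp [Multiset.map_replicate, Multiset.map_map, ← mul_assoc, hcot_tan]
  have hG_zero_pos : 0 < G 0 := by
    rw [hG_zero]
    exact_mod_cast Nat.choose_pos hrm
  filter_upwards [eventually_strictAntiOn_mul_cot_pow hG hG_zero_pos hr,
    Ioc_mem_nhdsGT (show (0 : ℝ) < π / 2 by positivity)] with δ ⟨hpos, hanti⟩ hδ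
  have hEq : EqOn (esymmCot (Multiset.replicate m 0 + A) r) (fun τ => G τ * cot τ ^ r) (Ioo 0 δ) :=
    fun τ hτ => hEG τ ⟨hτ.1, hτ.2.trans_le hδ.2⟩
  exact ⟨fun τ hτ => hEq hτ ▸ hpos τ hτ, hEq.congr_strictAntiOn.2 hanti⟩

theorem stmt_19 (r g : ℕ) (hr : 1 ≤ r)
    (hg : 2 ≤ g) (m : Fin g → ℕ)
    (hm₁ : r ≤ m ⟨0, by omega⟩)
    (H : ℝ → ℝ)
    (hH : ∀ τ, H τ =
      Multiset.esymm
        ((Finset.univ : Finset (Fin g)).val.bind fun i =>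
          Multiset.replicate (m i)
            (Real.cos (τ + (i : ℕ) * π / g) / Real.sin (τ + (i : ℕ) * π / g))) r) :
    ∃ δ > 0, δ ≤ π / g ∧ ∀ τ₀ ∈ Set.Ioo (0 : ℝ) δ,
      0 < H τ₀ ∧ StrictMonoOn (fun τ => H (τ₀ - τ)) (Set.Ico (0 : ℝ) τ₀) := by
  set i₀ : Fin g := ⟨0, by omega⟩
  set A : Multiset ℝ :=
    (Finset.univ.erase i₀).val.bind fun i => Multiset.replicate (m i) ((i : ℕ) * π / g)
  have hA : ∀ θ ∈ A, sin θ ≠ 0 := by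
    intro θ hθ
    obtain ⟨i, hi, hθ⟩ := Multiset.mem_bind.1 hθ
    have hi : i ≠ i₀ := Finset.ne_of_mem_erase (Finset.mem_val ▸ hi)
    rw [Multiset.eq_of_mem_replicate hθ]
    exact sin_nat_mul_pi_div_ne_zero (Nat.pos_of_ne_zero fun h => hi (Fin.ext h)) i.2
  have hHE : H = esymmCot (Multiset.replicate (m i₀) 0 + A) r := by
    have huniv : (Finset.univ : Finset (Fin g)).val = i₀ ::ₘ (Finset.univ.erase i₀).val := by
      rw [Finset.erase_val, Multiset.cons_erase (Finset.mem_univ i₀)]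
    funext τ
    rw [hH τ, esymmCot, huniv, Multiset.cons_bind, Multiset.map_add, Multiset.map_bind]
    simp [i₀, Multiset.map_replicate, cot_eq_cos_div_sin]
  obtain ⟨δ, ⟨hpos, hanti⟩, hδ⟩ := ((eventually_strictAntiOn_esymmCot hA (by omega) hm₁).and
    (Ioc_mem_nhdsGT (show 0 < π / g by positivity))).exists
  refine ⟨δ, hδ.1, hδ.2, fun τ₀ hτ₀ => ⟨hHE ▸ hpos τ₀ hτ₀, fun a ha b hb hab => ?_⟩⟩
  rw [hHE]
  exact hanti ⟨by linarith [hb.2], by linarith [hb.1, hτ₀.2]⟩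
    ⟨by linarith [ha.2], by linarith [ha.1, hτ₀.2]⟩ (by linarith)
end
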